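/- arXiv:2503.02568 — 2 statements merged into one kernel-verified Lean document; each statement's English description precedes it below -/
import Mathlib

section
/- Let ψ_1,…,ψ_N be unit vectors in ℂ^d with prior probabilities η_1,…,η_N, and let G be the Gram matrix of the ensemble. If Ξ_1,…,Ξ_N are positive semidefinite N×N complex matrices such that G − Σ_{k=1}^N Ξ_k is positive semidefinite, then there exists a POVM Π_1,…,Π_N with N outcomes on ℂ^d such that η_k ⟨ψ_k, Π_l ψ_k⟩ = (Ξ_l)_{k,k} for all k, l ∈ {1,…,N}. -/
/-!
Let `A` be the `d × N` matrix with columns `√η_k ψ_k`, so that `G = Aᴴ A`, and let `H` be the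
Moore–Penrose inverse of `G`. The candidate POVM is `Π_l = (A H) Ξ_l (A H)ᴴ`. Since
`0 ≤ Ξ_l ≤ G`, every `Ξ_l` vanishes on the kernel of `G`, hence `G H Ξ_l H G = Ξ_l`, which is
`Aᴴ Π_l A = Ξ_l`; its diagonal entries are the required probabilities. Completeness holds because
`∑ Π_l ≤ A H G H Aᴴ = A H Aᴴ`, an orthogonal projection.
-/

open Matrix BigOperators
open scoped ComplexOrder MatrixOrder

namespace Matrix

variable {m n ι : Type*} [Fintype m]

theorem conjTranspose_mul_mul_apply {α : Type*} [NonUnitalSemiring α] [StarRing α]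
    (A : Matrix m n α) (M : Matrix m m α) (k l : n) :
    (Aᴴ * M * A) k l = star (A.col k) ⬝ᵥ (M *ᵥ A.col l) := by
  rw [Matrix.mul_assoc]
  rfl

variable {𝕜 : Type*} [RCLike 𝕜] [Fintype n]

theorem mulVec_eq_zero_of_le_of_mulVec_eq_zero {X Y : Matrix n n 𝕜} (hX : 0 ≤ X) (hXY : X ≤ Y)
    {v : n → 𝕜} (hv : Y *ᵥ v = 0) : X *ᵥ v = 0 := by
  refine (hX.posSemidef.dotProduct_mulVec_zero_iff v).mp <|
    le_antisymm ?_ (hX.posSemidef.dotProduct_mulVec_nonneg v)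
  simpa [sub_mulVec, hv] using (le_iff.mp hXY).dotProduct_mulVec_nonneg v

theorem mul_eq_zero_of_le_of_mul_eq_zero [DecidableEq m] {X Y : Matrix n n 𝕜}
    {Q : Matrix n m 𝕜} (hX : 0 ≤ X) (hXY : X ≤ Y) (hQ : Y * Q = 0) : X * Q = 0 :=
  ext_of_mulVec_single fun j => by
    rw [← mulVec_mulVec, zero_mulVec]
    exact mulVec_eq_zero_of_le_of_mulVec_eq_zero hX hXY (by rw [mulVec_mulVec, hQ, zero_mulVec])

theorem mul_mul_conjTranspose_le_mul_mul_conjTranspose {X Y : Matrix n n 𝕜} (hXY : X ≤ Y)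
    (B : Matrix m n 𝕜) : B * X * Bᴴ ≤ B * Y * Bᴴ := by
  rw [le_iff, ← Matrix.sub_mul, ← Matrix.mul_sub]
  exact (le_iff.mp hXY).mul_mul_conjTranspose_same B

theorem IsHermitian.exists_pseudoInverse [DecidableEq n] {G : Matrix n n 𝕜} (hG : G.IsHermitian) :
    ∃ H : Matrix n n 𝕜, H.IsHermitian ∧ G * H * G = G ∧ H * G * H = H := by
  have hcont (f : ℝ → ℝ) : ContinuousOn f (spectrum ℝ G) := G.finite_real_spectrum.continuousOn f
  have hmul (f g : ℝ → ℝ) : cfc f G * cfc g G = cfc (fun x => f x * g x) G :=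
    (cfc_mul f g G (hcont f) (hcont g)).symm
  have hid : cfc (fun x : ℝ => x) G = G := cfc_id' ℝ G hG.isSelfAdjoint
  -- `(0 : ℝ)⁻¹ = 0` makes `cfc (·⁻¹) G` the Moore–Penrose inverse of `G`
  refine ⟨cfc (·⁻¹ : ℝ → ℝ) G, cfc_predicate _ G, ?_, ?_⟩
  · calc G * cfc (·⁻¹) G * G = cfc (fun x => x) G * cfc (·⁻¹) G * cfc (fun x => x) G := by
          rw [hid]
      _ = cfc (fun x => x * x⁻¹ * x) G := by rw [hmul, hmul]
      _ = G := by simp_rw [mul_inv_mul_cancel]; exact hid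
  · calc cfc (·⁻¹) G * G * cfc (·⁻¹) G = cfc (·⁻¹) G * cfc (fun x => x) G * cfc (·⁻¹) G := by
          rw [hid]
      _ = cfc (fun x => x⁻¹ * x * x⁻¹) G := by rw [hmul, hmul]
      _ = cfc (·⁻¹) G := by simpa using cfc_congr fun (x : ℝ) _ => mul_inv_mul_cancel x⁻¹

theorem exists_conjTranspose_mul_mul_eq_of_sum_le [Fintype ι] [DecidableEq m] [DecidableEq n]
    {A : Matrix m n 𝕜} {Ξ : ι → Matrix n n 𝕜} (hΞ : ∀ l, 0 ≤ Ξ l) (hsum : ∑ l, Ξ l ≤ Aᴴ * A) :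
    ∃ P : ι → Matrix m m 𝕜, (∀ l, 0 ≤ P l) ∧ ∑ l, P l ≤ 1 ∧ ∀ l, Aᴴ * P l * A = Ξ l := by
  obtain ⟨H, hH, hGHG, hHGH⟩ := (isHermitian_conjTranspose_mul_self A).exists_pseudoInverse
  have hBH : (A * H)ᴴ = H * Aᴴ := by rw [conjTranspose_mul, hH.eq]
  refine ⟨fun l => A * H * Ξ l * (A * H)ᴴ,
    fun l => ((hΞ l).posSemidef.mul_mul_conjTranspose_same _).nonneg, ?_, fun l => ?_⟩
  · have hproj : IsStarProjection (A * H * Aᴴ) := by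
      refine ⟨?_, ?_⟩
      · change A * H * Aᴴ * (A * H * Aᴴ) = A * H * Aᴴ
        calc A * H * Aᴴ * (A * H * Aᴴ) = A * (H * (Aᴴ * A) * H) * Aᴴ := by
              simp only [Matrix.mul_assoc]
          _ = A * H * Aᴴ := by rw [hHGH, Matrix.mul_assoc]
      · rw [IsSelfAdjoint, star_eq_conjTranspose, conjTranspose_mul, conjTranspose_mul,
          conjTranspose_conjTranspose, hH.eq, Matrix.mul_assoc]
    calc ∑ l, A * H * Ξ l * (A * H)ᴴ = A * H * (∑ l, Ξ l) * (A * H)ᴴ := by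
          rw [Matrix.mul_sum, Matrix.sum_mul]
      _ ≤ A * H * (Aᴴ * A) * (A * H)ᴴ := mul_mul_conjTranspose_le_mul_mul_conjTranspose hsum _
      _ = A * (H * (Aᴴ * A) * H) * Aᴴ := by simp only [hBH, Matrix.mul_assoc]
      _ = A * H * Aᴴ := by rw [hHGH, Matrix.mul_assoc]
      _ ≤ 1 := hproj.le_one
  · have hle : Ξ l ≤ Aᴴ * A :=
      (Finset.single_le_sum (fun k _ => hΞ k) (Finset.mem_univ l)).trans hsum
    have hright : Ξ l * (H * (Aᴴ * A)) = Ξ l := by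
      have := mul_eq_zero_of_le_of_mul_eq_zero (hΞ l) hle (Q := 1 - H * (Aᴴ * A))
        (by rw [Matrix.mul_sub, Matrix.mul_one, ← Matrix.mul_assoc, hGHG, sub_self])
      rwa [Matrix.mul_sub, Matrix.mul_one, sub_eq_zero, eq_comm] at this
    have hleft : Aᴴ * A * H * Ξ l = Ξ l := by
      simpa [conjTranspose_mul, hH.eq, (hΞ l).posSemidef.isHermitian.eq, Matrix.mul_assoc] using
        congrArg conjTranspose hright
    calc Aᴴ * (A * H * Ξ l * (A * H)ᴴ) * A = (Aᴴ * A * H * Ξ l) * (H * (Aᴴ * A)) := by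
          simp only [hBH, Matrix.mul_assoc]
      _ = Ξ l := by rw [hleft, hright]

end Matrix

theorem gram_complete_descriptor_converse_general
    (d N : ℕ) (ψ : Fin N → (Fin d → ℂ)) (η : Fin N → ℝ)
    (hη : ∀ k, 0 ≤ η k)
    (G : Matrix (Fin N) (Fin N) ℂ)
    (hG : ∀ k l, G k l = (Real.sqrt (η k * η l) : ℂ) * (star (ψ k) ⬝ᵥ ψ l))
    (Ξ : Fin N → Matrix (Fin N) (Fin N) ℂ)
    (hΞ : ∀ k, (Ξ k).PosSemidef)
    (hΞsum : (G - ∑ k, Ξ k).PosSemidef) :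
    ∃ P : Fin N → Matrix (Fin d) (Fin d) ℂ,
      (∀ k, (P k).PosSemidef) ∧ (1 - ∑ k, P k).PosSemidef ∧
      ∀ k l, (η k : ℂ) * (star (ψ k) ⬝ᵥ (P l *ᵥ ψ k)) = Ξ l k k := by
  set A : Matrix (Fin d) (Fin N) ℂ := (of fun k => (Real.sqrt (η k) : ℂ) • ψ k)ᵀ
  have hA (M : Matrix (Fin d) (Fin d) ℂ) (k l : Fin N) :
      (Aᴴ * M * A) k l = (Real.sqrt (η k * η l) : ℂ) * (star (ψ k) ⬝ᵥ (M *ᵥ ψ l)) := by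
    rw [conjTranspose_mul_mul_apply, Real.sqrt_mul (hη k)]
    change star ((Real.sqrt (η k) : ℂ) • ψ k) ⬝ᵥ (M *ᵥ ((Real.sqrt (η l) : ℂ) • ψ l)) = _
    simp only [star_smul, mulVec_smul, dotProduct_smul, smul_dotProduct, smul_eq_mul,
      Complex.star_def, Complex.conj_ofReal, Complex.ofReal_mul]
    ring
  have hAA : Aᴴ * A = G := by
    ext k l
    simpa [hG] using hA 1 k l
  obtain ⟨P, hP, hPsum, hPΞ⟩ := exists_conjTranspose_mul_mul_eq_of_sum_le
    (fun k => (hΞ k).nonneg) (hAA ▸ le_iff.mpr hΞsum)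
  refine ⟨P, fun k => (hP k).posSemidef, le_iff.mp hPsum, fun k l => ?_⟩
  rw [← hPΞ l, hA, Real.sqrt_mul_self (hη k)]

/-- Given an ensemble of unit vectors `ψ k ∈ ℂ^d` with prior
probabilities `η k` and Gram matrix `G`, if `Ξ k` are PSD `N × N` matrices with
`G - ∑ Ξ k` PSD, then there is an `N`-outcome POVM `P` on `ℂ^d` with
`η k ⟨ψ k, P l ψ k⟩ = (Ξ l) k k`. -/
theorem gram_complete_descriptor_converse
    (d N : ℕ) (ψ : Fin N → (Fin d → ℂ)) (η : Fin N → ℝ)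
    (hψ : ∀ k, star (ψ k) ⬝ᵥ ψ k = 1)
    (hη : ∀ k, 0 ≤ η k) (hηsum : ∑ k, η k = 1)
    (G : Matrix (Fin N) (Fin N) ℂ)
    (hG : ∀ k l, G k l = (Real.sqrt (η k * η l) : ℂ) * (star (ψ k) ⬝ᵥ ψ l))
    (Ξ : Fin N → Matrix (Fin N) (Fin N) ℂ)
    (hΞ : ∀ k, (Ξ k).PosSemidef)
    (hΞsum : (G - ∑ k, Ξ k).PosSemidef) :
    ∃ P : Fin N → Matrix (Fin d) (Fin d) ℂ,
      (∀ k, (P k).PosSemidef) ∧ (1 - ∑ k, P k).PosSemidef ∧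
      ∀ k l, (η k : ℂ) * (star (ψ k) ⬝ᵥ (P l *ᵥ ψ k)) = Ξ l k k :=
  gram_complete_descriptor_converse_general d N ψ η hη G hG Ξ hΞ hΞsum
end

section
/- Let ω be a unimodular multiplier on a finite group 𝒢 satisfying ω(f, f⁻¹) = 1 for all f ∈ 𝒢, and let G be a positive semidefinite 𝒢×𝒢 complex matrix lying in the ℂ-linear span of {conj(R_f) : f ∈ 𝒢}, where R_f are the projective right-regular representation matrices with multiplier ω. Let S be the positive semidefinite square root of G and, for each h ∈ 𝒢, let φ_h ∈ ℂ^𝒢 be the h-th column of S. Then ⟨φ_g, φ_h⟩ = G_{g,h} for all g, h ∈ 𝒢, and L_g φ_h = ω(g,h) φ_{gh} for all g, h ∈ 𝒢, where L_g are the projective left-regular representation matrices with multiplier ω. -/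
/-!
Unimodularity and `ω(f, f⁻¹) = 1` turn `conj (R f)` into the twisted right translation
`e_c ↦ ω(c, f⁻¹) e_{c f⁻¹}`, which commutes with every `L g` by the cocycle identity. Hence `L g`
commutes with `G`, and therefore with its positive square root `S`, a continuous function of `G`.
The Gram identity is `Sᴴ S = S * S = G` read entrywise, and
`L g φ_h = (L g S) e_h = (S L g) e_h = ω(g, h) φ_{gh}`.
-/

open Matrix
open scoped ComplexOrder

structure IsNormalizedCocycle {𝒢 M : Type*} [Group 𝒢] [Monoid M] (ω : 𝒢 → 𝒢 → M) : Prop where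
  cocycle : ∀ g h f, ω g h * ω (g * h) f = ω g (h * f) * ω h f
  map_one_right : ∀ g, ω g 1 = 1
  map_one_left : ∀ g, ω 1 g = 1

namespace IsNormalizedCocycle

variable {𝒢 M : Type*} [Group 𝒢] [Monoid M] {ω : 𝒢 → 𝒢 → M}

theorem inv_apply_self (hω : IsNormalizedCocycle ω) (hinv : ∀ f, ω f f⁻¹ = 1) (f : 𝒢) :
    ω f⁻¹ f = 1 := by
  simpa [hinv, hω.map_one_left, hω.map_one_right] using (hω.cocycle f f⁻¹ f).symm

theorem inv_apply_mul_self_mul (hω : IsNormalizedCocycle ω) (hinv : ∀ f, ω f f⁻¹ = 1) (f y : 𝒢) :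
    ω f⁻¹ (f * y) * ω f y = 1 := by
  simpa [hω.inv_apply_self hinv, hω.map_one_left] using (hω.cocycle f⁻¹ f y).symm

theorem apply_inv_mul_apply_inv (hω : IsNormalizedCocycle ω) (hinv : ∀ f, ω f f⁻¹ = 1) (f x : 𝒢) :
    ω x f⁻¹ * ω f x⁻¹ = 1 := by
  have hxf : ω (x * f⁻¹) (f * x⁻¹) = 1 := by simpa using hinv (x * f⁻¹)
  have h := hω.cocycle x f⁻¹ (f * x⁻¹)
  rw [inv_mul_cancel_left, hinv, one_mul, hxf, mul_one] at h
  rw [h, hω.inv_apply_mul_self_mul hinv]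

end IsNormalizedCocycle

section RegularRepresentations

variable {𝒢 α : Type*} [Group 𝒢] [DecidableEq 𝒢]

def projLeftRegular [Zero α] (ω : 𝒢 → 𝒢 → α) (g : 𝒢) : Matrix 𝒢 𝒢 α :=
  of fun r c => if r = g * c then ω g c else 0

def projRightRegular [Zero α] (ω : 𝒢 → 𝒢 → α) (g : 𝒢) : Matrix 𝒢 𝒢 α :=
  of fun r c => if r = c * g⁻¹ then ω g c⁻¹ else 0

def projRightMul [Zero α] (ω : 𝒢 → 𝒢 → α) (f : 𝒢) : Matrix 𝒢 𝒢 α :=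
  of fun r c => if r = c * f then ω c f else 0

theorem projLeftRegular_mul_apply [Fintype 𝒢] [NonUnitalNonAssocSemiring α] (ω : 𝒢 → 𝒢 → α) (g : 𝒢)
    (M : Matrix 𝒢 𝒢 α) (r c : 𝒢) :
    (projLeftRegular ω g * M) r c = ω g (g⁻¹ * r) * M (g⁻¹ * r) c := by
  have hsolve : ∀ k, r = g * k ↔ k = g⁻¹ * r := fun k => by rw [eq_inv_mul_iff_mul_eq, eq_comm]
  simp [projLeftRegular, mul_apply, hsolve]

theorem mul_projLeftRegular_apply [Fintype 𝒢] [NonUnitalNonAssocSemiring α] (ω : 𝒢 → 𝒢 → α) (g : 𝒢)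
    (M : Matrix 𝒢 𝒢 α) (r c : 𝒢) :
    (M * projLeftRegular ω g) r c = M r (g * c) * ω g c := by
  simp [projLeftRegular, mul_apply]

theorem commute_projLeftRegular_projRightMul [Fintype 𝒢] [CommSemiring α] {ω : 𝒢 → 𝒢 → α}
    (hω : ∀ g h f, ω g h * ω (g * h) f = ω g (h * f) * ω h f) (g f : 𝒢) :
    Commute (projLeftRegular ω g) (projRightMul ω f) := by
  ext r c
  rw [projLeftRegular_mul_apply, mul_projLeftRegular_apply]
  simp only [projRightMul, of_apply]
  by_cases hr : r = g * c * f
  · subst hr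
    simp only [mul_assoc, inv_mul_cancel_left, if_true]
    rw [← hω, mul_comm]
  · have : g⁻¹ * r ≠ c * f := fun h => hr (by rw [mul_assoc, ← h, mul_inv_cancel_left])
    simp [hr, this]

end RegularRepresentations

theorem map_conj_projRightRegular {𝒢 : Type*} [Group 𝒢] [DecidableEq 𝒢] {ω : 𝒢 → 𝒢 → ℂ}
    (hω : IsNormalizedCocycle ω) (huni : ∀ g h, ‖ω g h‖ = 1) (hinv : ∀ f, ω f f⁻¹ = 1) (f : 𝒢) :
    (projRightRegular ω f).map (starRingEnd ℂ) = projRightMul ω f⁻¹ := by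
  ext r c
  have h : starRingEnd ℂ (ω f c⁻¹) = ω c f⁻¹ := by
    rw [← RCLike.inv_eq_conj (huni f c⁻¹)]
    exact inv_eq_of_mul_eq_one_left (hω.apply_inv_mul_apply_inv hinv f c)
  by_cases hr : r = c * f⁻¹ <;> simp [projRightRegular, projRightMul, hr, h]

open scoped MatrixOrder in
theorem Matrix.PosSemidef.commute_of_commute_mul_self {𝕜 n : Type*} [RCLike 𝕜] [Fintype n]
    [DecidableEq n] {A S : Matrix n n 𝕜} (hS : S.PosSemidef) (h : Commute A (S * S)) :
    Commute A S := by
  rw [← CFC.sqrt_unique rfl hS.nonneg, CFC.sqrt_eq_cfc]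
  exact (h.symm.cfc_nnreal _).symm

theorem Matrix.star_transpose_dotProduct_transpose {m n α : Type*} [Fintype m]
    [NonUnitalSemiring α] [StarRing α] (M : Matrix m n α) (i j : n) :
    star (Mᵀ i) ⬝ᵥ Mᵀ j = (Mᴴ * M) i j :=
  rfl

theorem Matrix.mulVec_transpose_apply {m n o α : Type*} [Fintype n]
    [NonUnitalNonAssocSemiring α] (A : Matrix m n α) (M : Matrix n o α) (j : o) :
    A *ᵥ Mᵀ j = (A * M)ᵀ j :=
  rfl

theorem columns_of_sqrt_projective_gram_general
    (𝒢 : Type*) [Group 𝒢] [Fintype 𝒢] [DecidableEq 𝒢]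
    (ω : 𝒢 → 𝒢 → ℂ)
    (hωassoc : ∀ g h f, ω g h * ω (g * h) f = ω g (h * f) * ω h f)
    (hωe : ∀ g, ω g 1 = 1 ∧ ω 1 g = 1)
    (hωuni : ∀ g h, ‖ω g h‖ = 1)
    (hωinv : ∀ f : 𝒢, ω f f⁻¹ = 1)
    (L R : 𝒢 → Matrix 𝒢 𝒢 ℂ)
    (hL : ∀ g r c, L g r c = if r = g * c then ω g c else 0)
    (hR : ∀ g r c, R g r c = if r = c * g⁻¹ then ω g c⁻¹ else 0)
    (G : Matrix 𝒢 𝒢 ℂ)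
    (hGspan : G ∈ Submodule.span ℂ (Set.range fun f => (R f).map (starRingEnd ℂ)))
    (S : Matrix 𝒢 𝒢 ℂ) (hS : S.PosSemidef) (hSsq : S * S = G)
    (φ : 𝒢 → (𝒢 → ℂ)) (hφ : ∀ h l, φ h l = S l h) :
    (∀ g h, star (φ g) ⬝ᵥ φ h = G g h) ∧
    (∀ g h, L g *ᵥ φ h = ω g h • φ (g * h)) := by
  obtain rfl : L = projLeftRegular ω := funext fun g => Matrix.ext (hL g)
  obtain rfl : R = projRightRegular ω := funext fun g => Matrix.ext (hR g)
  obtain rfl : φ = Sᵀ := funext₂ hφ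
  have hω : IsNormalizedCocycle ω := ⟨hωassoc, fun g => (hωe g).1, fun g => (hωe g).2⟩
  have hLS (g : 𝒢) : Commute (projLeftRegular ω g) S := by
    have hG : G ∈ (Subalgebra.centralizer ℂ {projLeftRegular ω g}).toSubmodule := by
      refine Submodule.span_le.mpr (Set.range_subset_iff.mpr fun f => ?_) hGspan
      rw [SetLike.mem_coe, Subalgebra.mem_toSubmodule, Subalgebra.mem_centralizer_iff]
      rintro _ rfl
      rw [map_conj_projRightRegular hω hωuni hωinv]
      exact commute_projLeftRegular_projRightMul hωassoc g f⁻¹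
    refine hS.commute_of_commute_mul_self ?_
    rw [hSsq]
    exact (Subalgebra.mem_centralizer_iff ℂ).mp hG _ rfl
  refine ⟨fun g h => ?_, fun g h => ?_⟩
  · rw [star_transpose_dotProduct_transpose, hS.1.eq, hSsq]
  · ext r
    rw [mulVec_transpose_apply, (hLS g).eq]
    simp [mul_projLeftRegular_apply, mul_comm]

/-- Let `ω` be a unimodular multiplier with `ω(f, f⁻¹) = 1`,
`G` a PSD matrix in the span of the conjugated projective right-regular
representation matrices, `S` its positive semidefinite square root, and `φ h`
the `h`-th column of `S`. Then `⟨φ g, φ h⟩ = G g h` and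
`L g *ᵥ φ h = ω g h • φ (g * h)`. -/
theorem columns_of_sqrt_projective_gram
    (𝒢 : Type*) [Group 𝒢] [Fintype 𝒢] [DecidableEq 𝒢]
    (ω : 𝒢 → 𝒢 → ℂ)
    (hω0 : ∀ g h, ω g h ≠ 0)
    (hωassoc : ∀ g h f, ω g h * ω (g * h) f = ω g (h * f) * ω h f)
    (hωe : ∀ g, ω g 1 = 1 ∧ ω 1 g = 1)
    (hωuni : ∀ g h, ‖ω g h‖ = 1)
    (hωinv : ∀ f : 𝒢, ω f f⁻¹ = 1)
    (L R : 𝒢 → Matrix 𝒢 𝒢 ℂ)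
    (hL : ∀ g r c, L g r c = if r = g * c then ω g c else 0)
    (hR : ∀ g r c, R g r c = if r = c * g⁻¹ then ω g c⁻¹ else 0)
    (G : Matrix 𝒢 𝒢 ℂ) (hG : G.PosSemidef)
    (hGspan : G ∈ Submodule.span ℂ (Set.range fun f => (R f).map (starRingEnd ℂ)))
    (S : Matrix 𝒢 𝒢 ℂ) (hS : S.PosSemidef) (hSsq : S * S = G)
    (φ : 𝒢 → (𝒢 → ℂ)) (hφ : ∀ h l, φ h l = S l h) :
    (∀ g h, star (φ g) ⬝ᵥ φ h = G g h) ∧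
    (∀ g h, L g *ᵥ φ h = ω g h • φ (g * h)) :=
  columns_of_sqrt_projective_gram_general 𝒢 ω hωassoc hωe hωuni hωinv L R hL hR G hGspan S hS hSsq φ
    hφ
end
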